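/- Let M be an m×n matrix over a commutative ring, let k ≥ 1, let r₁,…,r_k be row indices and c₁,…,c_k, d₂,…,d_k be column indices. Then M(r₁…r_k | c₁…c_k) · M(r₂…r_k | d₂…d_k) = Σ_{a=1}^{k} (−1)^{a+1} M(r₁ r₂ … r_k | c_a d₂ … d_k) · M(r₂ … r_k | c₁ … c_{a−1} c_{a+1} … c_k), where M(rows | cols) denotes the minor given by those rows and columns taken in order. -/
import Mathlib


/-- Laplace-type identity for products of minors (lemma 4 of the paper), with row indices
`r₁,…,r_{k+1}`, column indices `c₁,…,c_{k+1}` and `d₂,…,d_{k+1}` (here 0-indexed). -/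
theorem stmt_6 {R : Type*} [CommRing R] {m n k : ℕ}
    (M : Matrix (Fin m) (Fin n) R)
    (r : Fin (k + 1) → Fin m) (c : Fin (k + 1) → Fin n) (d : Fin k → Fin n) :
    (M.submatrix r c).det * (M.submatrix (r ∘ Fin.succ) d).det =
      ∑ a : Fin (k + 1), (-1 : R) ^ (a : ℕ) *
        ((M.submatrix r (Fin.cons (c a) d)).det *
          (M.submatrix (r ∘ Fin.succ) (c ∘ a.succAbove)).det) := by
  -- Column expansion of the "mixed" minor
  have expand : ∀ a : Fin (k + 1),
      (M.submatrix r (Fin.cons (c a) d)).det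
        = ∑ i : Fin (k + 1), (-1 : R) ^ (i : ℕ) * M (r i) (c a) *
            (M.submatrix (r ∘ i.succAbove) d).det := by
    intro a
    rw [Matrix.det_succ_column_zero]
    refine Finset.sum_congr rfl fun i _ => ?_
    have h1 : (M.submatrix r (Fin.cons (c a) d)) i 0 = M (r i) (c a) := by simp
    have h2 : (M.submatrix r (Fin.cons (c a) d)).submatrix i.succAbove Fin.succ
        = M.submatrix (r ∘ i.succAbove) d := by ext x y; simp
    rw [h1, h2]
  -- Inner sum over `a` equals the determinant of a matrix with possibly repeated rows
  have key : ∀ i : Fin (k + 1),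
      (∑ a : Fin (k + 1), (-1 : R) ^ (a : ℕ) * M (r i) (c a) *
        (M.submatrix (r ∘ Fin.succ) (c ∘ a.succAbove)).det)
        = ((M.submatrix r c).submatrix (Fin.cons i Fin.succ) id).det := by
    intro i
    rw [Matrix.det_succ_row_zero]
    refine Finset.sum_congr rfl fun a _ => ?_
    have h1 : ((M.submatrix r c).submatrix (Fin.cons i Fin.succ) id) 0 a = M (r i) (c a) := by
      simp
    have h2 : ((M.submatrix r c).submatrix (Fin.cons i Fin.succ) id).submatrix
          Fin.succ a.succAbove = M.submatrix (r ∘ Fin.succ) (c ∘ a.succAbove) := by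
      ext x y; simp
    rw [h1, h2]
  have key2 : ∀ i : Fin (k + 1),
      ((M.submatrix r c).submatrix (Fin.cons i Fin.succ) id).det
        = if i = 0 then (M.submatrix r c).det else 0 := by
    intro i
    induction i using Fin.cases with
    | zero =>
      rw [if_pos rfl]
      have : (Fin.cons (0 : Fin (k + 1)) Fin.succ : Fin (k + 1) → Fin (k + 1)) = id := by
        funext x
        induction x using Fin.cases with
        | zero => rfl
        | succ j => rfl
      rw [this, Matrix.submatrix_id_id]
    | succ j =>
      rw [if_neg (Fin.succ_ne_zero j)]
      apply Matrix.det_zero_of_row_eq (i := 0) (j := j.succ) (Fin.succ_ne_zero j).symm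
      funext y
      simp
  -- Put things together
  have step : ∑ a : Fin (k + 1), (-1 : R) ^ (a : ℕ) *
        ((M.submatrix r (Fin.cons (c a) d)).det *
          (M.submatrix (r ∘ Fin.succ) (c ∘ a.succAbove)).det)
      = ∑ i : Fin (k + 1), ((-1 : R) ^ (i : ℕ) * (M.submatrix (r ∘ i.succAbove) d).det) *
          ∑ a : Fin (k + 1), (-1 : R) ^ (a : ℕ) * M (r i) (c a) *
            (M.submatrix (r ∘ Fin.succ) (c ∘ a.succAbove)).det := by
    calc ∑ a : Fin (k + 1), (-1 : R) ^ (a : ℕ) *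
            ((M.submatrix r (Fin.cons (c a) d)).det *
              (M.submatrix (r ∘ Fin.succ) (c ∘ a.succAbove)).det)
        = ∑ a : Fin (k + 1), ∑ i : Fin (k + 1),
            ((-1 : R) ^ (i : ℕ) * (M.submatrix (r ∘ i.succAbove) d).det) *
              ((-1 : R) ^ (a : ℕ) * M (r i) (c a) *
                (M.submatrix (r ∘ Fin.succ) (c ∘ a.succAbove)).det) := by
          refine Finset.sum_congr rfl fun a _ => ?_
          rw [expand a, Finset.sum_mul, Finset.mul_sum]
          exact Finset.sum_congr rfl fun i _ => by ring
      _ = ∑ i : Fin (k + 1), ∑ a : Fin (k + 1),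
            ((-1 : R) ^ (i : ℕ) * (M.submatrix (r ∘ i.succAbove) d).det) *
              ((-1 : R) ^ (a : ℕ) * M (r i) (c a) *
                (M.submatrix (r ∘ Fin.succ) (c ∘ a.succAbove)).det) := Finset.sum_comm
      _ = _ := Finset.sum_congr rfl fun i _ => by rw [Finset.mul_sum]
  rw [step]
  have step2 : ∀ i : Fin (k + 1),
      ((-1 : R) ^ (i : ℕ) * (M.submatrix (r ∘ i.succAbove) d).det) *
          (∑ a : Fin (k + 1), (-1 : R) ^ (a : ℕ) * M (r i) (c a) *
            (M.submatrix (r ∘ Fin.succ) (c ∘ a.succAbove)).det)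
        = if i = 0 then
            ((-1 : R) ^ (i : ℕ) * (M.submatrix (r ∘ i.succAbove) d).det) *
              (M.submatrix r c).det
          else 0 := by
    intro i
    rw [key i, key2 i]
    split <;> ring
  rw [Finset.sum_congr rfl fun i _ => step2 i, Finset.sum_ite_eq' Finset.univ (0 : Fin (k + 1))]
  simp [Fin.succAbove_zero, mul_comm]
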